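/- arXiv:1305.5054 — 2 statements merged into one kernel-verified Lean document; each statement's English description precedes it below -/
import Mathlib

section
/- Let W(s) = (1/4)(1 - s^2)^2, q(t) = tanh(t/√2), c₀ = 2√2/3, and fix σ ∈ (0,1). Then for every natural number k, ε^{-k} · | ∫_{-ε^{1-σ/2}}^{ε^{1-σ/2}} (1/ε) ( (1/2) q'(t/ε)^2 + W(q(t/ε)) ) dt − c₀ | → 0 as ε → 0⁺. In other words, the rescaled one-dimensional profile energy on the interval (-ε^{1-σ/2}, ε^{1-σ/2}) approximates c₀ to within an error that vanishes faster than any power of ε. -/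
open Filter Topology

/-- The double-well potential `W(s) = (1/4)(1-s²)²`. -/
noncomputable def W (s : ℝ) : ℝ := (1 / 4) * (1 - s ^ 2) ^ 2

/-- The optimal one-dimensional profile `q(t) = tanh(t/√2)`. -/
noncomputable def q (t : ℝ) : ℝ := Real.tanh (t / Real.sqrt 2)

/-!
The profile satisfies equipartition, `q' = (1 - q²)/√2 = √(2 W(q))`, so the energy density is
`(1 - q²)²/2`, the derivative of `(√2/2)(q - q³/3)`. Hence the energy on `(-R, R)` is
`√2 (q R - (q R)³/3)`, which falls short of `c₀ = 2√2/3` by `√2 (1 - q R)² (q R + 2)/3`, and this is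
`O(exp(-2√2 R))` because `1 - tanh x ≤ 2 exp(-2x)`. Rescaling turns `(-ε^{1-σ/2}, ε^{1-σ/2})`
into `(-R, R)` with `R = ε^{-σ/2}`, and `exp(-2√2 ε^{-σ/2})` is smaller than every power of `ε`.
-/

open Real

theorem Real.hasDerivAt_tanh (x : ℝ) : HasDerivAt tanh (1 - tanh x ^ 2) x := by
  have hcosh := (cosh_pos x).ne'
  have h := (hasDerivAt_sinh x).div (hasDerivAt_cosh x) hcosh
  rw [show sinh / cosh = tanh from funext fun y => (tanh_eq_sinh_div_cosh y).symm] at h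
  refine h.congr_deriv ?_
  rw [tanh_eq_sinh_div_cosh]
  field_simp

theorem Real.continuous_tanh : Continuous tanh :=
  continuous_iff_continuousAt.2 fun x => (hasDerivAt_tanh x).continuousAt

theorem Real.one_sub_tanh_le (x : ℝ) : 1 - tanh x ≤ 2 * exp (-(2 * x)) := by
  have hx := exp_pos x
  have hnx := exp_pos (-x)
  have h2x : exp (-(2 * x)) = exp (-x) ^ 2 := by rw [← exp_nat_mul]; ring_nf
  rw [tanh_eq, h2x, one_sub_div (by positivity), div_le_iff₀ (by positivity)]
  nlinarith [mul_pos hx hnx, exp_neg x, mul_inv_cancel₀ hx.ne']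

theorem hasDerivAt_q (t : ℝ) : HasDerivAt q ((1 - q t ^ 2) / √2) t := by
  have h := (hasDerivAt_tanh (t / √2)).comp t ((hasDerivAt_id t).div_const √2)
  refine h.congr_deriv ?_
  rw [q]
  ring

theorem continuous_q : Continuous q := continuous_tanh.comp (continuous_id.div_const _)

theorem energy_density_q (t : ℝ) :
    (1 / 2) * deriv q t ^ 2 + W (q t) = (1 - q t ^ 2) ^ 2 / 2 := by
  rw [(hasDerivAt_q t).deriv, W, div_pow, sq_sqrt zero_le_two]
  ring

theorem hasDerivAt_energy_primitive_q (t : ℝ) :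
    HasDerivAt (fun t => √2 / 2 * (q t - q t ^ 3 / 3))
      ((1 / 2) * deriv q t ^ 2 + W (q t)) t := by
  have h := hasDerivAt_q t
  refine ((h.sub ((h.pow 3).div_const 3)).const_mul (√2 / 2)).congr_deriv ?_
  rw [energy_density_q]
  field_simp
  ring

theorem integral_energy_q (R : ℝ) :
    ∫ s in -R..R, ((1 / 2) * deriv q s ^ 2 + W (q s)) = √2 * (q R - q R ^ 3 / 3) := by
  have hcont : Continuous fun s => (1 / 2) * deriv q s ^ 2 + W (q s) := by
    simp only [energy_density_q]
    have := continuous_q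
    fun_prop
  rw [intervalIntegral.integral_eq_sub_of_hasDerivAt (fun t _ => hasDerivAt_energy_primitive_q t)
    (hcont.intervalIntegrable _ _)]
  simp only [q, neg_div, tanh_neg]
  ring

theorem one_sub_q_le (R : ℝ) : 1 - q R ≤ 2 * exp (-(√2 * R)) := by
  have h2 : 2 * (R / √2) = √2 * R := by
    field_simp
    rw [sq_sqrt zero_le_two]
    ring
  rw [q, ← h2]
  exact one_sub_tanh_le _

theorem abs_integral_energy_q_sub_le (R : ℝ) :
    |(∫ s in -R..R, ((1 / 2) * deriv q s ^ 2 + W (q s))) - 2 * √2 / 3|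
      ≤ 4 * √2 * exp (-(2 * √2) * R) := by
  have htail := one_sub_q_le R
  rw [integral_energy_q]
  set x := q R
  have hx1 : x < 1 := tanh_lt_one _
  have hx2 : -1 < x := neg_one_lt_tanh _
  have hsq : (1 - x) ^ 2 ≤ 4 * exp (-(2 * √2) * R) := by
    have : exp (-(2 * √2) * R) = exp (-(√2 * R)) ^ 2 := by rw [← exp_nat_mul]; ring_nf
    rw [this]
    nlinarith
  have hs : 0 < √2 := by positivity
  rw [show √2 * (x - x ^ 3 / 3) - 2 * √2 / 3 = -(√2 * ((1 - x) ^ 2 * (x + 2) / 3)) by ring,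
    abs_neg, abs_of_nonneg (mul_nonneg hs.le (by nlinarith))]
  calc √2 * ((1 - x) ^ 2 * (x + 2) / 3) ≤ √2 * (1 - x) ^ 2 := by gcongr; nlinarith
    _ ≤ 4 * √2 * exp (-(2 * √2) * R) := by nlinarith

theorem intervalIntegral.integral_one_div_mul_comp_div (f : ℝ → ℝ) {ε : ℝ} (hε : ε ≠ 0)
    (a b : ℝ) : ∫ t in a..b, (1 / ε) * f (t / ε) = ∫ s in a / ε..b / ε, f s := by
  rw [intervalIntegral.integral_const_mul, intervalIntegral.integral_comp_div _ hε, smul_eq_mul,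
    ← mul_assoc, one_div_mul_cancel hε, one_mul]

theorem tendsto_rpow_neg_mul_exp_neg_mul_rpow_neg {α b : ℝ} (hα : 0 < α) (hb : 0 < b) (s : ℝ) :
    Tendsto (fun ε : ℝ => ε ^ (-s) * exp (-b * ε ^ (-α))) (𝓝[>] 0) (𝓝 0) := by
  have hy : Tendsto (fun ε : ℝ => ε ^ (-α)) (𝓝[>] 0) atTop := by
    refine ((tendsto_rpow_atTop hα).comp tendsto_inv_nhdsGT_zero).congr' ?_
    filter_upwards [self_mem_nhdsWithin] with ε (hε : 0 < ε)
    rw [Function.comp_apply, inv_rpow hε.le, rpow_neg hε.le]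
  refine ((tendsto_rpow_mul_exp_neg_mul_atTop_nhds_zero (s / α) b hb).comp hy).congr' ?_
  filter_upwards [self_mem_nhdsWithin] with ε (hε : 0 < ε)
  rw [Function.comp_apply, ← rpow_mul hε.le]
  congr 2
  field_simp

/-- The rescaled one-dimensional profile energy on `(-ε^{1-σ/2}, ε^{1-σ/2})` approximates
`c₀ = 2√2/3` to within an error vanishing faster than any power of `ε`. -/
theorem inner_energy_approx (σ : ℝ) (hσ : σ ∈ Set.Ioo (0 : ℝ) 1) (k : ℕ) :
    Tendsto (fun ε : ℝ =>
        ε ^ (-(k : ℝ)) *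
          |(∫ t in (-(ε ^ (1 - σ / 2)))..(ε ^ (1 - σ / 2)),
              (1 / ε) * ((1 / 2) * (deriv q (t / ε)) ^ 2 + W (q (t / ε)))) -
            2 * Real.sqrt 2 / 3|)
      (𝓝[>] (0 : ℝ)) (𝓝 (0 : ℝ)) := by
  have hbound := (tendsto_rpow_neg_mul_exp_neg_mul_rpow_neg (half_pos hσ.1)
    (by positivity : 0 < 2 * √2) k).const_mul (4 * √2)
  rw [mul_zero] at hbound
  refine squeeze_zero' ?_ ?_ hbound
  · filter_upwards [self_mem_nhdsWithin] with ε (hε : 0 < ε)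
    positivity
  filter_upwards [self_mem_nhdsWithin] with ε (hε : 0 < ε)
  have hscale : ε ^ (1 - σ / 2) / ε = ε ^ (-(σ / 2)) := by
    rw [← rpow_sub_one hε.ne']; ring_nf
  rw [intervalIntegral.integral_one_div_mul_comp_div (fun s => 1 / 2 * deriv q s ^ 2 + W (q s))
    hε.ne', neg_div, hscale, mul_left_comm]
  gcongr
  exact abs_integral_energy_q_sub_le _
end

section
/- Let n ∈ {2,3} and λ ∈ (0, 1/50). There exists a constant C > 0, depending only on n and λ, with the following property: for every ε ∈ (0,1), every twice continuously differentiable u : ℝⁿ → ℝ, and every continuously differentiable compactly supported η : ℝⁿ → [0,1] with |∇η| ≤ 1 everywhere, setting ν := −ε Δu + (1/ε) W'(u), one has ∫_{{|u| ≥ 1−λ}} (1/ε) W(u) η^2 dx ≤ 15 λ ∫_{{|u| ≤ 1−λ} ∩ supp η} ε |∇u|^2 dx + C ε ∫_{supp η} ( ν^2 + W'(u)^2 + 1 ) dx. -/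
/-!
Test `ν = -εΔu + ε⁻¹W'(u)` against `φ = g(u) η²`, where `g(s) = W'(s) m / M(1 - s²)` with `M` a
smoothed `max(·, m)` and `m = λ(2 - λ) = 1 - (1 - λ)²`. Integrating by parts,
`∫ ν φ = ε ∫ ⟪∇φ, ∇u⟫ + ε⁻¹ ∫ W'(u) g(u) η²`, and since `g² ≤ W' g`, Young's inequality absorbs the
left side: `∫ W'(u) g(u) η² ≤ ε² ∫ (ν² - 2⟪∇φ, ∇u⟫)`. On `{|u| ≥ 1 - λ}` we have `g' ≥ 1/2`, so the
Dirichlet part of `⟪∇φ, ∇u⟫` absorbs the cross term `2ηg(u)⟪∇η, ∇u⟫` up to `2W'(u)²`; on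
`{|u| ≤ 1 - λ}` both `g` and `g'` are `O(λ)`, which produces the `λ ∫ ε|∇u|²` term. Finally
`W ≤ (2/5) W' g` on `{|u| ≥ 1 - λ}`, where `g` is comparable to `W'`.
-/

open MeasureTheory

/-- Its derivative `W'(s) = s³ - s`. -/
noncomputable def W' (s : ℝ) : ℝ := s ^ 3 - s

/-- The Laplacian of `u : ℝⁿ → ℝ`, `Δu = Σᵢ ∂²u/∂xᵢ²`. -/
noncomputable def lap {n : ℕ} (u : EuclideanSpace ℝ (Fin n) → ℝ)
    (x : EuclideanSpace ℝ (Fin n)) : ℝ :=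
  ∑ i : Fin n, fderiv ℝ (fun y => fderiv ℝ u y (EuclideanSpace.single i 1)) x
    (EuclideanSpace.single i 1)

@[fun_prop]
lemma continuous_W : Continuous W := by
  unfold W; fun_prop

@[fun_prop]
lemma continuous_W' : Continuous W' := by
  unfold W'; fun_prop

noncomputable def smoothMax (m t : ℝ) : ℝ := (t + m + √((t - m) ^ 2 + m ^ 2)) / 2

noncomputable def smoothMaxDeriv (m t : ℝ) : ℝ := (1 + (t - m) / √((t - m) ^ 2 + m ^ 2)) / 2

section SmoothMax

variable {m t : ℝ}

lemma abs_sub_le_sqrt_sub_sq_add_sq : |t - m| ≤ √((t - m) ^ 2 + m ^ 2) :=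
  Real.abs_le_sqrt (by nlinarith [sq_nonneg m])

lemma max_le_smoothMax : max t m ≤ smoothMax m t := by
  have := abs_sub_le_sqrt_sub_sq_add_sq (m := m) (t := t)
  rw [smoothMax, le_div_iff₀ two_pos]
  rcases le_total t m with h | h
  · rw [max_eq_right h, abs_of_nonpos (by linarith)] at *; linarith
  · rw [max_eq_left h, abs_of_nonneg (by linarith)] at *; linarith

lemma smoothMax_le (hm : 0 ≤ m) : smoothMax m t ≤ max t m + m / 2 := by
  have : √((t - m) ^ 2 + m ^ 2) ≤ |t - m| + m :=
    Real.sqrt_le_iff.2 ⟨by positivity, by nlinarith [sq_abs (t - m), abs_nonneg (t - m)]⟩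
  rw [smoothMax, div_le_iff₀ two_pos]
  rcases le_total t m with h | h
  · rw [max_eq_right h, abs_of_nonpos (by linarith)] at *; linarith
  · rw [max_eq_left h, abs_of_nonneg (by linarith)] at *; linarith

lemma smoothMax_pos (hm : 0 < m) : 0 < smoothMax m t :=
  hm.trans_le ((le_max_right t m).trans max_le_smoothMax)

lemma hasDerivAt_smoothMax (hm : m ≠ 0) : HasDerivAt (smoothMax m) (smoothMaxDeriv m t) t := by
  have hq : HasDerivAt (fun t => (t - m) ^ 2 + m ^ 2) (2 * (t - m)) t := by
    simpa using (((hasDerivAt_id' t).sub_const m).pow 2).add_const (m ^ 2)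
  have hpos : 0 < (t - m) ^ 2 + m ^ 2 := by positivity
  refine ((((hasDerivAt_id' t).add_const m).add (hq.sqrt hpos.ne')).div_const 2).congr_deriv ?_
  rw [smoothMaxDeriv]
  field_simp

lemma continuous_smoothMax : Continuous (smoothMax m) := by
  unfold smoothMax; fun_prop

lemma continuous_smoothMaxDeriv (hm : m ≠ 0) : Continuous (smoothMaxDeriv m) := by
  unfold smoothMaxDeriv
  fun_prop (disch := exact fun t => (by positivity : 0 < √((t - m) ^ 2 + m ^ 2)).ne')

lemma abs_smoothMaxDeriv_sub_half_le : |smoothMaxDeriv m t - 1 / 2| ≤ 1 / 2 := by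
  have : |(t - m) / √((t - m) ^ 2 + m ^ 2)| ≤ 1 := by
    rw [abs_div, abs_of_nonneg (Real.sqrt_nonneg _)]
    exact div_le_one_of_le₀ abs_sub_le_sqrt_sub_sq_add_sq (Real.sqrt_nonneg _)
  rw [smoothMaxDeriv, abs_le] at *
  constructor <;> linarith

lemma smoothMaxDeriv_le_half (ht : t ≤ m) : smoothMaxDeriv m t ≤ 1 / 2 := by
  rw [smoothMaxDeriv]
  have : (t - m) / √((t - m) ^ 2 + m ^ 2) ≤ 0 :=
    div_nonpos_of_nonpos_of_nonneg (by linarith) (Real.sqrt_nonneg _)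
  linarith

lemma mul_smoothMaxDeriv_le (hm : 0 ≤ m) : t * smoothMaxDeriv m t ≤ smoothMax m t := by
  have hD := abs_le.1 (abs_smoothMaxDeriv_sub_half_le (m := m) (t := t))
  have hM := max_le_smoothMax (m := m) (t := t)
  rcases le_total t 0 with ht | ht
  · nlinarith [le_max_right t m]
  · nlinarith [le_max_left t m]

lemma two_mul_mul_smoothMaxDeriv_le (hm : 0 ≤ m) (htm : t ≤ m) :
    2 * (t * smoothMaxDeriv m t) ≤ smoothMax m t := by
  have hD := abs_le.1 (abs_smoothMaxDeriv_sub_half_le (m := m) (t := t))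
  have hM := max_le_smoothMax (m := m) (t := t)
  have := smoothMaxDeriv_le_half htm
  rcases le_total t 0 with ht | ht
  · nlinarith [le_max_right t m]
  · nlinarith [le_max_right t m]

lemma div_smoothMax_pos (hm : 0 < m) : 0 < m / smoothMax m t :=
  div_pos hm (smoothMax_pos hm)

lemma div_smoothMax_le_one (hm : 0 < m) : m / smoothMax m t ≤ 1 :=
  div_le_one_of_le₀ ((le_max_right t m).trans max_le_smoothMax) (smoothMax_pos hm).le

lemma two_thirds_le_div_smoothMax (hm : 0 < m) (ht : t ≤ m) : 2 / 3 ≤ m / smoothMax m t := by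
  have := smoothMax_le (t := t) hm.le
  rw [max_eq_right ht] at this
  rw [le_div_iff₀ (smoothMax_pos hm)]
  linarith

lemma mul_div_smoothMax_le (hm : 0 < m) : t * (m / smoothMax m t) ≤ m := by
  rw [mul_div_assoc', div_le_iff₀ (smoothMax_pos hm)]
  nlinarith [le_max_left t m, max_le_smoothMax (m := m) (t := t)]

end SmoothMax

noncomputable def testFun (m s : ℝ) : ℝ := W' s * (m / smoothMax m (1 - s ^ 2))

section TestFun

variable {m : ℝ}

lemma hasDerivAt_testFun (hm : 0 < m) (s : ℝ) :
    HasDerivAt (testFun m) (m / smoothMax m (1 - s ^ 2) * (3 * s ^ 2 - 1 -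
      2 * s ^ 2 * ((1 - s ^ 2) * smoothMaxDeriv m (1 - s ^ 2)) / smoothMax m (1 - s ^ 2))) s := by
  have hM := smoothMax_pos (t := 1 - s ^ 2) hm
  have ht : HasDerivAt (fun s => 1 - s ^ 2) (-(2 * s)) s := by
    simpa using (hasDerivAt_pow 2 s).const_sub 1
  refine (((hasDerivAt_pow 3 s).sub (hasDerivAt_id' s)).mul ((hasDerivAt_const s m).div
    ((hasDerivAt_smoothMax hm.ne').comp s ht) hM.ne')).congr_deriv ?_
  simp only [Function.comp_apply, Pi.div_apply, Pi.sub_apply]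
  field_simp
  ring

lemma contDiff_testFun (hm : 0 < m) : ContDiff ℝ 1 (testFun m) := by
  refine contDiff_one_iff_deriv.2 ⟨fun s => (hasDerivAt_testFun hm s).differentiableAt, ?_⟩
  rw [funext fun s => (hasDerivAt_testFun hm s).deriv]
  have hM : Continuous fun s : ℝ => smoothMax m (1 - s ^ 2) :=
    continuous_smoothMax.comp (by fun_prop)
  have hD : Continuous fun s : ℝ => smoothMaxDeriv m (1 - s ^ 2) :=
    (continuous_smoothMaxDeriv hm.ne').comp (by fun_prop)
  fun_prop (disch := exact fun _ => (smoothMax_pos hm).ne')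

variable {s : ℝ}

lemma testFun_sq_le (hm : 0 < m) : testFun m s ^ 2 ≤ W' s * testFun m s := by
  have h0 := div_smoothMax_pos (t := 1 - s ^ 2) hm
  have h1 := div_smoothMax_le_one (t := 1 - s ^ 2) hm
  rw [testFun]
  nlinarith [mul_nonneg (mul_nonneg (sq_nonneg (W' s)) h0.le) (sub_nonneg.2 h1)]

lemma abs_testFun_le (hm : 0 < m) (hs : m ≤ 1 - s ^ 2) : |testFun m s| ≤ m := by
  have h0 := div_smoothMax_pos (t := 1 - s ^ 2) hm
  have h1 := mul_div_smoothMax_le (t := 1 - s ^ 2) hm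
  have hs1 : |s| ≤ 1 := abs_le_one_iff_mul_self_le_one.2 (by nlinarith)
  have : |testFun m s| = |s| * ((1 - s ^ 2) * (m / smoothMax m (1 - s ^ 2))) := by
    rw [testFun, W', show s ^ 3 - s = -(s * (1 - s ^ 2)) by ring, abs_mul, abs_neg, abs_mul,
      abs_of_nonneg (by linarith : 0 ≤ 1 - s ^ 2), abs_of_pos h0]
    ring
  rw [this]
  nlinarith [abs_nonneg s]

lemma neg_le_deriv_testFun (hm : 0 < m) : -m ≤ deriv (testFun m) s := by
  have h0 := div_smoothMax_pos (t := 1 - s ^ 2) hm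
  have h1 := mul_div_smoothMax_le (t := 1 - s ^ 2) hm
  have hM := smoothMax_pos (t := 1 - s ^ 2) hm
  have hD := mul_smoothMaxDeriv_le (t := 1 - s ^ 2) hm.le
  rw [(hasDerivAt_testFun hm s).deriv]
  have : 2 * s ^ 2 * ((1 - s ^ 2) * smoothMaxDeriv m (1 - s ^ 2)) / smoothMax m (1 - s ^ 2)
      ≤ 2 * s ^ 2 := by
    rw [div_le_iff₀ hM]
    nlinarith [sq_nonneg s]
  nlinarith

lemma half_le_deriv_testFun (hm : 0 < m) (hm' : m ≤ 1 / 16) (hs : 1 - s ^ 2 ≤ m) :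
    1 / 2 ≤ deriv (testFun m) s := by
  have h0 := two_thirds_le_div_smoothMax hm hs
  have hM := smoothMax_pos (t := 1 - s ^ 2) hm
  have hD := two_mul_mul_smoothMaxDeriv_le hm.le hs
  rw [(hasDerivAt_testFun hm s).deriv]
  have : 2 * s ^ 2 * ((1 - s ^ 2) * smoothMaxDeriv m (1 - s ^ 2)) / smoothMax m (1 - s ^ 2)
      ≤ s ^ 2 := by
    rw [div_le_iff₀ hM]
    nlinarith [sq_nonneg s]
  nlinarith

lemma W_le_testFun (hm : 0 < m) (hm' : m ≤ 1 / 16) (hs : 1 - s ^ 2 ≤ m) :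
    W s ≤ 2 / 5 * (W' s * testFun m s) := by
  have h0 := two_thirds_le_div_smoothMax hm hs
  have hW : W' s * testFun m s = 4 * s ^ 2 * W s * (m / smoothMax m (1 - s ^ 2)) := by
    rw [testFun, W', W]; ring
  have hW0 : 0 ≤ W s := by rw [W]; positivity
  rw [hW]
  nlinarith [mul_le_mul_of_nonneg_left h0 (mul_nonneg (sq_nonneg s) hW0)]

end TestFun

structure IsDeviationTestFun (lam : ℝ) (g : ℝ → ℝ) : Prop where
  contDiff : ContDiff ℝ 1 g
  sq_le : ∀ s, g s ^ 2 ≤ W' s * g s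
  abs_le : ∀ s, |s| ≤ 1 - lam → |g s| ≤ 2 * lam
  neg_le_deriv : ∀ s, -(2 * lam) ≤ deriv g s
  half_le_deriv : ∀ s, 1 - lam ≤ |s| → 1 / 2 ≤ deriv g s
  W_le : ∀ s, 1 - lam ≤ |s| → W s ≤ 2 / 5 * (W' s * g s)

theorem isDeviationTestFun_testFun {lam : ℝ} (h₀ : 0 < lam) (h₁ : lam ≤ 1 / 32) :
    IsDeviationTestFun lam (testFun (lam * (2 - lam))) := by
  have hm : 0 < lam * (2 - lam) := by nlinarith
  have hm' : lam * (2 - lam) ≤ 1 / 16 := by nlinarith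
  -- `lam * (2 - lam) = 1 - (1 - lam) ^ 2`, so `|s| ≤ 1 - lam ↔ lam * (2 - lam) ≤ 1 - s ^ 2`
  have sq_sub (s : ℝ) : 1 - s ^ 2 - lam * (2 - lam) = (1 - lam) ^ 2 - |s| ^ 2 := by
    rw [sq_abs]; ring
  refine ⟨contDiff_testFun hm, fun s => testFun_sq_le hm, fun s hs => ?_,
    fun s => (neg_le_deriv_testFun hm).trans' (by nlinarith), fun s hs => ?_, fun s hs => ?_⟩
  · refine (abs_testFun_le hm ?_).trans (by nlinarith)
    nlinarith [sq_sub s, abs_nonneg s]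
  · exact half_le_deriv_testFun hm hm' (by nlinarith [sq_sub s, abs_nonneg s])
  · exact W_le_testFun hm hm' (by nlinarith [sq_sub s, abs_nonneg s])

lemma mul_mul_sq_le_of_sq_le_mul {ε v w b a : ℝ} (hε : 0 < ε) (hb : b ^ 2 ≤ w * b)
    (ha : a ∈ Set.Icc (0 : ℝ) 1) :
    v * (b * a ^ 2) ≤ ε / 2 * v ^ 2 + 1 / (2 * ε) * (w * b * a ^ 2) := by
  obtain ⟨ha₀, ha₁⟩ := ha
  have hP : (b * a ^ 2) ^ 2 ≤ w * b * a ^ 2 := by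
    have : a ^ 4 ≤ a ^ 2 := pow_le_pow_of_le_one ha₀ ha₁ (by norm_num)
    nlinarith [mul_le_mul_of_nonneg_right hb (pow_nonneg ha₀ 4),
      mul_le_mul_of_nonneg_left this ((sq_nonneg _).trans hb)]
  rw [show ε / 2 * v ^ 2 + 1 / (2 * ε) * (w * b * a ^ 2) =
    ((ε * v) ^ 2 + w * b * a ^ 2) / (2 * ε) by field_simp, le_div_iff₀ (by positivity)]
  nlinarith [two_mul_le_add_sq (ε * v) (b * a ^ 2)]

lemma neg_sq_mul_add_le_of_abs_le {a b b' z c lam : ℝ} (ha : a ∈ Set.Icc (0 : ℝ) 1)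
    (hc : |c| ≤ z) (hlam : 0 ≤ lam) (hb : |b| ≤ 2 * lam) (hb' : -(2 * lam) ≤ b') :
    -(a ^ 2 * b' * z ^ 2 + 2 * a * b * c) ≤ 3 * lam * z ^ 2 + 4 * lam := by
  obtain ⟨ha₀, ha₁⟩ := ha
  have hz : 0 ≤ z := (abs_nonneg c).trans hc
  have h₁ : -(a ^ 2 * b' * z ^ 2) ≤ 2 * lam * z ^ 2 := by
    have : a ^ 2 ≤ 1 := pow_le_one₀ ha₀ ha₁
    nlinarith [mul_nonneg (sq_nonneg a) (sq_nonneg z), mul_nonneg (sq_nonneg z) hlam]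
  have h₂ : -(2 * a * b * c) ≤ 4 * lam * z := by
    have : |b * c| ≤ 2 * lam * z := by
      rw [abs_mul]; exact mul_le_mul hb hc (abs_nonneg c) (by linarith)
    nlinarith [neg_abs_le (b * c), mul_nonneg hlam hz]
  nlinarith [mul_nonneg hlam (sq_nonneg (z - 2))]

lemma neg_sq_mul_add_le_of_half_le {a b b' z c : ℝ} (ha : a ∈ Set.Icc (0 : ℝ) 1)
    (hc : |c| ≤ z) (hb' : 1 / 2 ≤ b') :
    -(a ^ 2 * b' * z ^ 2 + 2 * a * b * c) ≤ 2 * b ^ 2 := by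
  obtain ⟨ha₀, ha₁⟩ := ha
  have h₁ : -(2 * a * b * c) ≤ 2 * |b| * (a * z) := by
    have : |b * c| ≤ |b| * z := by rw [abs_mul]; exact mul_le_mul_of_nonneg_left hc (abs_nonneg b)
    nlinarith [neg_abs_le (b * c)]
  nlinarith [mul_nonneg (sq_nonneg a) (sq_nonneg z), sq_nonneg (a * z - 2 * |b|), sq_abs b]

lemma sq_le_sq_of_sq_le_mul {a b : ℝ} (h : b ^ 2 ≤ a * b) : b ^ 2 ≤ a ^ 2 := by
  nlinarith [sq_nonneg (a - b)]

section Green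

variable {n : ℕ} {u : EuclideanSpace ℝ (Fin n) → ℝ}

lemma fderiv_single_eq_gradient_apply (u : EuclideanSpace ℝ (Fin n) → ℝ)
    (x : EuclideanSpace ℝ (Fin n)) (i : Fin n) :
    fderiv ℝ u x (EuclideanSpace.single i 1) = gradient u x i := by
  rw [← InnerProductSpace.toDual_symm_apply, ← gradient, EuclideanSpace.inner_single_right]
  simp

lemma sum_apply_single_mul_fderiv_single (L : EuclideanSpace ℝ (Fin n) →L[ℝ] ℝ)
    (u : EuclideanSpace ℝ (Fin n) → ℝ) (x : EuclideanSpace ℝ (Fin n)) :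
    ∑ i, L (EuclideanSpace.single i 1) * fderiv ℝ u x (EuclideanSpace.single i 1) =
      L (gradient u x) := by
  conv_rhs => rw [← (EuclideanSpace.basisFun (Fin n) ℝ).sum_repr (gradient u x)]
  simp [fderiv_single_eq_gradient_apply, mul_comm]

lemma ContDiff.continuous_gradient (hu : ContDiff ℝ 1 u) : Continuous (gradient u) :=
  (InnerProductSpace.toDual ℝ _).symm.continuous.comp (hu.continuous_fderiv one_ne_zero)

lemma ContDiff.continuous_lap (hu : ContDiff ℝ 2 u) : Continuous (lap u) :=
  continuous_finsetSum _ fun _ _ => ((((hu.fderiv_right (by norm_num)).clm_apply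
    contDiff_const).continuous_fderiv one_ne_zero).clm_apply continuous_const)

theorem integral_mul_lap {P : EuclideanSpace ℝ (Fin n) → ℝ} (hu : ContDiff ℝ 2 u)
    (hP : ContDiff ℝ 1 P) (hPc : HasCompactSupport P) :
    ∫ x, P x * lap u x = -∫ x, fderiv ℝ P x (gradient u x) := by
  have hdu (v) : ContDiff ℝ 1 fun y => fderiv ℝ u y v :=
    (hu.fderiv_right (by norm_num)).clm_apply contDiff_const
  have hdP (v) : Integrable fun x => fderiv ℝ P x v * fderiv ℝ u x v :=
    (((hP.continuous_fderiv one_ne_zero).clm_apply continuous_const).mul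
      (hdu v).continuous).integrable_of_hasCompactSupport (hPc.fderiv_apply ℝ v).mul_right
  have hPd2u (v) : Integrable fun x => P x * fderiv ℝ (fun y => fderiv ℝ u y v) x v :=
    (hP.continuous.mul (((hdu v).continuous_fderiv one_ne_zero).clm_apply
      continuous_const)).integrable_of_hasCompactSupport hPc.mul_right
  have by_parts (v) : ∫ x, P x * fderiv ℝ (fun y => fderiv ℝ u y v) x v =
      -∫ x, fderiv ℝ P x v * fderiv ℝ u x v :=
    integral_mul_fderiv_eq_neg_fderiv_mul_of_integrable (hdP v) (hPd2u v)
      ((hP.continuous.mul (hdu v).continuous).integrable_of_hasCompactSupport hPc.mul_right)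
      (fun x _ => hP.differentiable one_ne_zero x)
      (fun x _ => (hdu v).differentiable one_ne_zero x)
  simp_rw [lap, Finset.mul_sum]
  rw [integral_finsetSum _ fun i _ => hPd2u _]
  simp_rw [by_parts, Finset.sum_neg_distrib, ← sum_apply_single_mul_fderiv_single _ u]
  rw [integral_finsetSum _ fun i _ => hdP _]

end Green

noncomputable def firstVariation {n : ℕ} (ε : ℝ) (u : EuclideanSpace ℝ (Fin n) → ℝ)
    (x : EuclideanSpace ℝ (Fin n)) : ℝ :=
  -(ε * lap u x) + (1 / ε) * W' (u x)

noncomputable def innerGradTest {n : ℕ} (g : ℝ → ℝ) (u η : EuclideanSpace ℝ (Fin n) → ℝ)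
    (x : EuclideanSpace ℝ (Fin n)) : ℝ :=
  η x ^ 2 * deriv g (u x) * ‖gradient u x‖ ^ 2 +
    2 * η x * g (u x) * inner ℝ (gradient η x) (gradient u x)

section Energy

variable {n : ℕ} {u η : EuclideanSpace ℝ (Fin n) → ℝ} {g : ℝ → ℝ} {ε : ℝ}

lemma fderiv_comp_mul_sq_apply_gradient {x : EuclideanSpace ℝ (Fin n)}
    (hg : Differentiable ℝ g) (hu : DifferentiableAt ℝ u x) (hη : DifferentiableAt ℝ η x) :
    fderiv ℝ (fun y => g (u y) * η y ^ 2) x (gradient u x) =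
      innerGradTest g u η x := by
  have hgu : HasFDerivAt (fun y => g (u y)) (deriv g (u x) • fderiv ℝ u x) x :=
    (hg (u x)).hasDerivAt.comp_hasFDerivAt x hu.hasFDerivAt
  rw [(hgu.fun_mul (hη.hasFDerivAt.pow 2)).fderiv]
  simp only [add_apply, smul_apply, smul_eq_mul,
    ← inner_gradient_left, real_inner_self_eq_norm_sq, innerGradTest]
  ring

lemma setIntegral_firstVariation_mul_eq (hg : ContDiff ℝ 1 g) (hu : ContDiff ℝ 2 u)
    (hη : ContDiff ℝ 1 η) (hηc : HasCompactSupport η) :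
    ∫ x in tsupport η, firstVariation ε u x * (g (u x) * η x ^ 2) =
      ε * (∫ x in tsupport η, innerGradTest g u η x) +
      1 / ε * ∫ x in tsupport η, W' (u x) * g (u x) * η x ^ 2 := by
  have hu1 : ContDiff ℝ 1 u := hu.of_le one_le_two
  have hP : ContDiff ℝ 1 fun y => g (u y) * η y ^ 2 := (hg.comp hu1).mul (hη.pow 2)
  have hPc : HasCompactSupport fun y => g (u y) * η y ^ 2 :=
    (hηc.comp_left (g := fun t : ℝ => t ^ 2) (by simp)).mul_left
  have hη0 {x} (hx : x ∉ tsupport η) : η x = 0 := image_eq_zero_of_notMem_tsupport hx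
  have integrableOn {F : EuclideanSpace ℝ (Fin n) → ℝ} (hF : Continuous F) :
      IntegrableOn F (tsupport η) := hF.continuousOn.integrableOn_compact hηc
  have hgu := hg.continuous.comp hu1.continuous
  have hW'gu : Continuous fun x => W' (u x) * g (u x) * η x ^ 2 := by
    have := hu1.continuous; fun_prop
  calc ∫ x in tsupport η, firstVariation ε u x * (g (u x) * η x ^ 2)
      = ∫ x in tsupport η, (-ε * (g (u x) * η x ^ 2 * lap u x) +
          1 / ε * (W' (u x) * g (u x) * η x ^ 2)) := by
        congr 1; ext x; rw [firstVariation]; ring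
    _ = -ε * (∫ x in tsupport η, g (u x) * η x ^ 2 * lap u x) +
          1 / ε * ∫ x in tsupport η, W' (u x) * g (u x) * η x ^ 2 := by
        rw [integral_add, integral_const_mul, integral_const_mul]
        · exact (integrableOn (hP.continuous.mul hu.continuous_lap)).const_mul _
        · exact (integrableOn hW'gu).const_mul _
    _ = _ := by
        rw [setIntegral_eq_integral_of_forall_compl_eq_zero fun x hx => by simp [hη0 hx],
          integral_mul_lap hu hP hPc]
        simp_rw [fderiv_comp_mul_sq_apply_gradient (hg.differentiable one_ne_zero)
          (hu1.differentiable one_ne_zero _) (hη.differentiable one_ne_zero _)]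
        rw [neg_mul_neg]
        congr 2
        exact (setIntegral_eq_integral_of_forall_compl_eq_zero fun x hx => by
          simp [innerGradTest, hη0 hx]).symm

lemma ContDiff.continuous_firstVariation (hu : ContDiff ℝ 2 u) :
    Continuous (firstVariation ε u) := by
  have := hu.continuous
  have := hu.continuous_lap
  unfold firstVariation; fun_prop

lemma continuous_innerGradTest (hg : ContDiff ℝ 1 g) (hu : ContDiff ℝ 1 u)
    (hη : ContDiff ℝ 1 η) : Continuous (innerGradTest g u η) := by
  have := hu.continuous
  have := hη.continuous
  have := hg.continuous
  have := hg.continuous_deriv le_rfl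
  have := hu.continuous_gradient
  have := hη.continuous_gradient
  unfold innerGradTest; fun_prop
lemma setIntegral_W'_mul_le (hε : 0 < ε) (hg : ContDiff ℝ 1 g)
    (hgW' : ∀ s, g s ^ 2 ≤ W' s * g s) (hu : ContDiff ℝ 2 u) (hη : ContDiff ℝ 1 η)
    (hηc : HasCompactSupport η) (hη01 : ∀ x, η x ∈ Set.Icc (0 : ℝ) 1) :
    ∫ x in tsupport η, W' (u x) * g (u x) * η x ^ 2 ≤
      ε ^ 2 * ∫ x in tsupport η, (firstVariation ε u x ^ 2 -
        2 * innerGradTest g u η x) := by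
  have integrableOn {F : EuclideanSpace ℝ (Fin n) → ℝ} (hF : Continuous F) :
      IntegrableOn F (tsupport η) := hF.continuousOn.integrableOn_compact hηc
  have hu1 : ContDiff ℝ 1 u := hu.of_le one_le_two
  have hν := hu.continuous_firstVariation (ε := ε)
  have hgu : Continuous fun x => g (u x) := hg.continuous.comp hu1.continuous
  have hηcont := hη.continuous
  have hQ := continuous_innerGradTest hg hu1 hη
  have hucont := hu1.continuous
  have hYoung := setIntegral_mono_on (integrableOn (by fun_prop)) (integrableOn (by fun_prop))
    hηc.isCompact.measurableSet fun x _ =>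
      mul_mul_sq_le_of_sq_le_mul (v := firstVariation ε u x) hε (hgW' (u x)) (hη01 x)
  rw [integral_add (integrableOn (by fun_prop)) (integrableOn (by fun_prop)), integral_const_mul,
    integral_const_mul, setIntegral_firstVariation_mul_eq hg hu hη hηc] at hYoung
  rw [integral_sub (integrableOn (by fun_prop)) (integrableOn (by fun_prop)), integral_const_mul]
  generalize ∫ x in tsupport η, W' (u x) * g (u x) * η x ^ 2 = J at hYoung ⊢
  generalize ∫ x in tsupport η, firstVariation ε u x ^ 2 = N at hYoung ⊢
  generalize ∫ x in tsupport η, innerGradTest g u η x = R at hYoung ⊢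
  have := mul_le_mul_of_nonneg_left hYoung (by positivity : 0 ≤ 2 * ε)
  have e1 : 2 * ε * (ε * R + 1 / ε * J) = 2 * ε ^ 2 * R + 2 * J := by field_simp
  have e2 : 2 * ε * (ε / 2 * N + 1 / (2 * ε) * J) = ε ^ 2 * N + J := by field_simp
  linarith

end Energy

section Estimate

variable {n : ℕ} {u η : EuclideanSpace ℝ (Fin n) → ℝ} {g : ℝ → ℝ} {ε lam : ℝ}

lemma neg_innerGradTest_le (hg : IsDeviationTestFun lam g) (hlam : 0 ≤ lam)
    {x : EuclideanSpace ℝ (Fin n)} (hηx : η x ∈ Set.Icc (0 : ℝ) 1) (hgradη : ‖gradient η x‖ ≤ 1) :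
    -innerGradTest g u η x ≤ 3 * lam * {x | |u x| ≤ 1 - lam}.indicator
      (fun x => ‖gradient u x‖ ^ 2) x + 4 * lam + 2 * W' (u x) ^ 2 := by
  have hc : |inner ℝ (gradient η x) (gradient u x)| ≤ ‖gradient u x‖ :=
    (abs_real_inner_le_norm _ _).trans (mul_le_of_le_one_left (norm_nonneg _) hgradη)
  have hW' := sq_nonneg (W' (u x))
  rw [innerGradTest]
  by_cases hx : |u x| ≤ 1 - lam
  · rw [Set.indicator_of_mem (by exact hx)]
    linarith [neg_sq_mul_add_le_of_abs_le hηx hc hlam (hg.abs_le _ hx) (hg.neg_le_deriv (u x))]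
  · rw [Set.indicator_of_notMem (by exact hx)]
    linarith [neg_sq_mul_add_le_of_half_le (b := g (u x)) hηx hc (hg.half_le_deriv _ (by linarith)),
      sq_le_sq_of_sq_le_mul (hg.sq_le (u x))]

lemma setIntegral_sub_two_innerGradTest_le (hg : IsDeviationTestFun lam g) (hlam₀ : 0 ≤ lam)
    (hlam₁ : lam ≤ 1 / 2) (hu : ContDiff ℝ 2 u) (hη : ContDiff ℝ 1 η) (hηc : HasCompactSupport η)
    (hη01 : ∀ x, η x ∈ Set.Icc (0 : ℝ) 1) (hgradη : ∀ x, ‖gradient η x‖ ≤ 1) :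
    ∫ x in tsupport η, (firstVariation ε u x ^ 2 - 2 * innerGradTest g u η x) ≤
      6 * lam * (∫ x in {x | |u x| ≤ 1 - lam} ∩ tsupport η, ‖gradient u x‖ ^ 2) +
        5 * ∫ x in tsupport η, (firstVariation ε u x ^ 2 + W' (u x) ^ 2 + 1) := by
  have integrableOn {F : EuclideanSpace ℝ (Fin n) → ℝ} (hF : Continuous F) :
      IntegrableOn F (tsupport η) := hF.continuousOn.integrableOn_compact hηc
  have hu1 : ContDiff ℝ 1 u := hu.of_le one_le_two
  have hT : MeasurableSet {x | |u x| ≤ 1 - lam} :=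
    measurableSet_le (hu1.continuous.abs.measurable) measurable_const
  have hν := hu.continuous_firstVariation (ε := ε)
  have hQ := continuous_innerGradTest hg.contDiff hu1 hη
  have hgradu := hu1.continuous_gradient
  have hucont := hu1.continuous
  have hind : IntegrableOn ({x | |u x| ≤ 1 - lam}.indicator fun x => ‖gradient u x‖ ^ 2)
      (tsupport η) := (integrableOn (by fun_prop)).indicator hT
  calc ∫ x in tsupport η, (firstVariation ε u x ^ 2 - 2 * innerGradTest g u η x)
      ≤ ∫ x in tsupport η, (6 * lam * {x | |u x| ≤ 1 - lam}.indicator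
          (fun x => ‖gradient u x‖ ^ 2) x + 5 * (firstVariation ε u x ^ 2 + W' (u x) ^ 2 + 1)) := by
        refine setIntegral_mono_on (integrableOn (by fun_prop))
          ((hind.const_mul _).add ((integrableOn (by fun_prop)).const_mul _))
          hηc.isCompact.measurableSet fun x _ => ?_
        have := neg_innerGradTest_le (u := u) hg hlam₀ (hη01 x) (hgradη x)
        nlinarith [sq_nonneg (firstVariation ε u x), sq_nonneg (W' (u x))]
    _ = _ := by
        rw [integral_add (hind.const_mul _) ((integrableOn (by fun_prop)).const_mul _),
          integral_const_mul, integral_const_mul, setIntegral_indicator hT, Set.inter_comm]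

lemma setIntegral_W_le (hg : IsDeviationTestFun lam g) (hε : 0 < ε) (hu : Continuous u)
    (hη : Continuous η) (hηc : HasCompactSupport η) :
    ∫ x in {x | 1 - lam ≤ |u x|}, (1 / ε) * W (u x) * η x ^ 2 ≤
      2 / 5 * (1 / ε) * ∫ x in tsupport η, W' (u x) * g (u x) * η x ^ 2 := by
  have hη2 : HasCompactSupport fun x => η x ^ 2 := hηc.comp_left (g := fun t : ℝ => t ^ 2) (by simp)
  have hgc := hg.contDiff.continuous
  have hJcont : Continuous fun x => W' (u x) * g (u x) * η x ^ 2 := by fun_prop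
  have hJ : Integrable fun x => W' (u x) * g (u x) * η x ^ 2 :=
    hJcont.integrable_of_hasCompactSupport hη2.mul_left
  rw [setIntegral_eq_integral_of_forall_compl_eq_zero (s := tsupport η) fun x hx => by
    simp [image_eq_zero_of_notMem_tsupport hx], ← integral_const_mul]
  refine (setIntegral_mono_on ?_ (hJ.const_mul _).integrableOn
    (measurableSet_le measurable_const hu.abs.measurable) fun x hx => ?_).trans
    (setIntegral_le_integral (hJ.const_mul _) (Filter.Eventually.of_forall fun x => ?_))
  · have : Continuous fun x => 1 / ε * W (u x) * η x ^ 2 := by fun_prop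
    exact (this.integrable_of_hasCompactSupport hη2.mul_left).integrableOn
  · have := mul_le_mul_of_nonneg_left (hg.W_le (u x) hx) (by positivity : 0 ≤ 1 / ε * η x ^ 2)
    linarith
  · have := (sq_nonneg _).trans (hg.sq_le (u x))
    positivity

theorem setIntegral_potential_le (hg : IsDeviationTestFun lam g) (hlam₀ : 0 ≤ lam)
    (hlam₁ : lam ≤ 1 / 2) (hε : 0 < ε) (hu : ContDiff ℝ 2 u) (hη : ContDiff ℝ 1 η)
    (hηc : HasCompactSupport η) (hη01 : ∀ x, η x ∈ Set.Icc (0 : ℝ) 1)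
    (hgradη : ∀ x, ‖gradient η x‖ ≤ 1) :
    ∫ x in {x | 1 - lam ≤ |u x|}, (1 / ε) * W (u x) * η x ^ 2 ≤
      15 * lam * (∫ x in {x | |u x| ≤ 1 - lam} ∩ tsupport η, ε * ‖gradient u x‖ ^ 2) +
        2 * ε * ∫ x in tsupport η, (firstVariation ε u x ^ 2 + W' (u x) ^ 2 + 1) := by
  have hpot := setIntegral_W_le hg hε hu.continuous hη.continuous hηc
  have habsorb := setIntegral_W'_mul_le hε hg.contDiff hg.sq_le hu hη hηc hη01
  have hQ := setIntegral_sub_two_innerGradTest_le (ε := ε) hg hlam₀ hlam₁ hu hη hηc hη01 hgradη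
  have hD : 0 ≤ ∫ x in {x | |u x| ≤ 1 - lam} ∩ tsupport η, ‖gradient u x‖ ^ 2 :=
    setIntegral_nonneg_of_ae_restrict (Filter.Eventually.of_forall fun _ => sq_nonneg _)
  rw [integral_const_mul]
  generalize ∫ x in {x | |u x| ≤ 1 - lam} ∩ tsupport η, ‖gradient u x‖ ^ 2 = D at hQ hD ⊢
  calc _ ≤ 2 / 5 * (1 / ε) * ∫ x in tsupport η, W' (u x) * g (u x) * η x ^ 2 := hpot
    _ ≤ 2 / 5 * (1 / ε) * (ε ^ 2 * (6 * lam * D +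
          5 * ∫ x in tsupport η, (firstVariation ε u x ^ 2 + W' (u x) ^ 2 + 1))) := by
        gcongr
        exact habsorb.trans (by gcongr)
    _ = 12 / 5 * lam * (ε * D) +
          2 * ε * ∫ x in tsupport η, (firstVariation ε u x ^ 2 + W' (u x) ^ 2 + 1) := by
        field_simp
        ring
    _ ≤ _ := by
        gcongr
        norm_num

end Estimate

theorem small_deviations_general (n : ℕ)
    (lam : ℝ) (hlam : lam ∈ Set.Ioo (0 : ℝ) (1 / 50)) :
    ∃ C : ℝ, 0 < C ∧
      ∀ ε : ℝ, ε ∈ Set.Ioo (0 : ℝ) 1 →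
      ∀ u : EuclideanSpace ℝ (Fin n) → ℝ, ContDiff ℝ 2 u →
      ∀ η : EuclideanSpace ℝ (Fin n) → ℝ, ContDiff ℝ 1 η → HasCompactSupport η →
        (∀ x, η x ∈ Set.Icc (0 : ℝ) 1) → (∀ x, ‖gradient η x‖ ≤ 1) →
        (∫ x in {x | 1 - lam ≤ |u x|}, (1 / ε) * W (u x) * η x ^ 2) ≤
          15 * lam * (∫ x in {x | |u x| ≤ 1 - lam} ∩ tsupport η, ε * ‖gradient u x‖ ^ 2) +
            C * ε * ∫ x in tsupport η,
              ((-(ε * lap u x) + (1 / ε) * W' (u x)) ^ 2 + W' (u x) ^ 2 + 1) := by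
  obtain ⟨hlam₀, hlam₁⟩ := hlam
  exact ⟨2, two_pos, fun ε hε u hu η hη hηc hη01 hgradη =>
    setIntegral_potential_le (isDeviationTestFun_testFun hlam₀ (by linarith)) hlam₀.le
      (by linarith) hε.1 hu hη hηc hη01 hgradη⟩

/-- Quantitative control of the potential energy on `{|u| ≥ 1−λ}` by a small multiple of
the Dirichlet energy on the transition set `{|u| ≤ 1−λ}` plus terms of order `ε`,
where `ν = −εΔu + (1/ε)W'(u)` is the diffuse first variation. -/
theorem small_deviations (n : ℕ) (hn : n = 2 ∨ n = 3)
    (lam : ℝ) (hlam : lam ∈ Set.Ioo (0 : ℝ) (1 / 50)) :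
    ∃ C : ℝ, 0 < C ∧
      ∀ ε : ℝ, ε ∈ Set.Ioo (0 : ℝ) 1 →
      ∀ u : EuclideanSpace ℝ (Fin n) → ℝ, ContDiff ℝ 2 u →
      ∀ η : EuclideanSpace ℝ (Fin n) → ℝ, ContDiff ℝ 1 η → HasCompactSupport η →
        (∀ x, η x ∈ Set.Icc (0 : ℝ) 1) → (∀ x, ‖gradient η x‖ ≤ 1) →
        (∫ x in {x | 1 - lam ≤ |u x|}, (1 / ε) * W (u x) * η x ^ 2) ≤
          15 * lam * (∫ x in {x | |u x| ≤ 1 - lam} ∩ tsupport η, ε * ‖gradient u x‖ ^ 2) +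
            C * ε * ∫ x in tsupport η,
              ((-(ε * lap u x) + (1 / ε) * W' (u x)) ^ 2 + W' (u x) ^ 2 + 1) :=
  small_deviations_general n lam hlam
end
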